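/- Let (S, I) be a nonnegative solution of system (C) on J × ℝ₊ with initial data (S₀, I₀), and set N = S + I. Assume there exists C ≥ 1 such that 0 ≤ N(x,0) ≤ C n₀ (x/m) for all x ∈ J. Let d = min(D_I, D_S), D = max(D_I, D_S) and C̃ = max(C, D/d) ≥ 1. Then for all x ∈ J and all t ≥ 0, 0 ≤ N(x,t) ≤ C̃ n₀ (x/m). -/

import Mathlib

/-!
Integrating the equation for `N = S + I` against `p`, each exchange term
`D (φ - (x/m)⟨φ⟩)` has zero mean because `⟨x⟩ = m`, so `⟨S⟩ + ⟨I⟩ = n₀` for all time.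
Pointwise, nonnegativity of `S`, `I`, `⟨S⟩`, `⟨I⟩` then gives
`∂ₜN ≤ -d N + D n₀ x/m ≤ -d (N - C̃ n₀ x/m)`, and a Grönwall comparison keeps `N` below
`C̃ n₀ x/m`, where it starts.
-/

open Set MeasureTheory Function Interval

section ParametricIntegral

variable {F F' : ℝ → ℝ → ℝ} {p : ℝ → ℝ} {a b c d : ℝ}

lemma exists_bound_of_continuousOn_Icc_prod
    (hF : ContinuousOn (uncurry F) (Icc a b ×ˢ Icc c d)) :
    ∃ M, ∀ y ∈ Icc a b, ∀ t ∈ Icc c d, ‖F y t‖ ≤ M := by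
  obtain ⟨M, hM⟩ := (isCompact_Icc.prod isCompact_Icc).exists_bound_of_continuousOn hF
  exact ⟨M, fun y hy t ht => hM (y, t) ⟨hy, ht⟩⟩

lemma intervalIntegrable_mul_of_continuousOn_prod (hab : a ≤ b)
    (hp : IntervalIntegrable p volume a b) (hF : ContinuousOn (uncurry F) (Icc a b ×ˢ Icc c d))
    {t : ℝ} (ht : t ∈ Icc c d) : IntervalIntegrable (fun y => F y t * p y) volume a b :=
  hp.continuousOn_mul (uIcc_of_le hab ▸ hF.uncurry_right t ht)

lemma continuousOn_intervalIntegral_mul (hab : a ≤ b) (hp : IntervalIntegrable p volume a b)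
    (hF : ContinuousOn (uncurry F) (Icc a b ×ˢ Icc c d)) :
    ContinuousOn (fun t => ∫ y in a..b, F y t * p y) (Icc c d) := by
  obtain ⟨M, hM⟩ := exists_bound_of_continuousOn_Icc_prod hF
  have hIoc : Ι a b ⊆ Icc a b := uIoc_of_le hab ▸ Ioc_subset_Icc_self
  intro t ht
  refine intervalIntegral.continuousWithinAt_of_dominated_interval
    (bound := fun y => M * |p y|) ?_ ?_ (hp.abs.const_mul M) ?_
  · filter_upwards [self_mem_nhdsWithin] with τ hτ
    exact (intervalIntegrable_mul_of_continuousOn_prod hab hp hF hτ).def'.aestronglyMeasurable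
  · filter_upwards [self_mem_nhdsWithin] with τ hτ
    refine ae_of_all _ fun y hy => ?_
    rw [norm_mul, Real.norm_eq_abs]
    exact mul_le_mul_of_nonneg_right (hM y (hIoc hy) τ hτ) (abs_nonneg _)
  · refine ae_of_all _ fun y hy => ?_
    exact ((hF.uncurry_left y (hIoc hy)) t ht).mul continuousWithinAt_const

lemma hasDerivAt_intervalIntegral_mul (hab : a ≤ b) (hp : IntervalIntegrable p volume a b)
    (hF : ContinuousOn (uncurry F) (Icc a b ×ˢ Icc c d))
    (hF' : ContinuousOn (uncurry F') (Icc a b ×ˢ Icc c d))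
    (hderiv : ∀ y ∈ Icc a b, ∀ t ∈ Ioo c d, HasDerivAt (F y) (F' y t) t)
    {t₀ : ℝ} (ht₀ : t₀ ∈ Ioo c d) :
    HasDerivAt (fun t => ∫ y in a..b, F y t * p y) (∫ y in a..b, F' y t₀ * p y) t₀ := by
  obtain ⟨M, hM⟩ := exists_bound_of_continuousOn_Icc_prod hF'
  have hIoc : Ι a b ⊆ Icc a b := uIoc_of_le hab ▸ Ioc_subset_Icc_self
  refine (intervalIntegral.hasDerivAt_integral_of_dominated_loc_of_deriv_le
    (F := fun t y => F y t * p y) (F' := fun t y => F' y t * p y)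
    (bound := fun y => M * |p y|) (Ioo_mem_nhds ht₀.1 ht₀.2) ?_
    (intervalIntegrable_mul_of_continuousOn_prod hab hp hF (Ioo_subset_Icc_self ht₀))
    (intervalIntegrable_mul_of_continuousOn_prod hab hp hF'
      (Ioo_subset_Icc_self ht₀)).def'.aestronglyMeasurable
    ?_ (hp.abs.const_mul M) ?_).2
  · filter_upwards [Ioo_mem_nhds ht₀.1 ht₀.2] with t ht
    exact (intervalIntegrable_mul_of_continuousOn_prod hab hp hF
      (Ioo_subset_Icc_self ht)).def'.aestronglyMeasurable
  · refine ae_of_all _ fun y hy t ht => ?_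
    rw [norm_mul, Real.norm_eq_abs]
    exact mul_le_mul_of_nonneg_right (hM y (hIoc hy) t (Ioo_subset_Icc_self ht)) (abs_nonneg _)
  · exact ae_of_all _ fun y hy t ht => (hderiv y (hIoc hy) t ht).mul_const (p y)

lemma continuousOn_sub_div_mul_intervalIntegral (hab : a ≤ b)
    (hp : IntervalIntegrable p volume a b) (hF : ContinuousOn (uncurry F) (Icc a b ×ˢ Icc c d))
    (m : ℝ) :
    ContinuousOn (uncurry fun y τ => F y τ - y / m * ∫ z in a..b, F z τ * p z)
      (Icc a b ×ˢ Icc c d) :=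
  hF.sub ((continuous_fst.div_const m).continuousOn.mul
    ((continuousOn_intervalIntegral_mul hab hp hF).comp continuousOn_snd fun _ hq => hq.2))

end ParametricIntegral

section Redistribution

variable {G H p : ℝ → ℝ} {a b m : ℝ}

lemma intervalIntegrable_sub_div_mul (hab : a ≤ b) (hp : IntervalIntegrable p volume a b)
    (hG : ContinuousOn G (Icc a b)) :
    IntervalIntegrable (fun y => (G y - y / m * ∫ z in a..b, G z * p z) * p y) volume a b :=
  hp.continuousOn_mul
    (uIcc_of_le hab ▸ hG.sub ((continuousOn_id.div_const m).mul continuousOn_const))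

lemma intervalIntegral_sub_div_mul_eq_zero (hab : a ≤ b) (hp : IntervalIntegrable p volume a b)
    (hG : ContinuousOn G (Icc a b)) (hm : m = ∫ y in a..b, y * p y) (hm0 : m ≠ 0) :
    ∫ y in a..b, (G y - y / m * ∫ z in a..b, G z * p z) * p y = 0 := by
  set g := ∫ z in a..b, G z * p z
  have hGp : IntervalIntegrable (fun y => G y * p y) volume a b :=
    hp.continuousOn_mul (uIcc_of_le hab ▸ hG)
  have hyp : IntervalIntegrable (fun y => y * p y) volume a b := hp.continuousOn_mul continuousOn_id
  calc ∫ y in a..b, (G y - y / m * g) * p y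
      = ∫ y in a..b, (G y * p y - g / m * (y * p y)) := by congr 1; ext y; ring
    _ = g - g / m * m := by
      rw [intervalIntegral.integral_sub hGp (hyp.const_mul _), intervalIntegral.integral_const_mul,
        ← hm]
    _ = 0 := by field_simp; ring

lemma intervalIntegral_exchange_mul_eq_zero (DS DI : ℝ) (hab : a ≤ b)
    (hp : IntervalIntegrable p volume a b) (hG : ContinuousOn G (Icc a b))
    (hH : ContinuousOn H (Icc a b)) (hm : m = ∫ y in a..b, y * p y) (hm0 : m ≠ 0) :
    ∫ y in a..b, (-(DS * (G y - y / m * ∫ z in a..b, G z * p z))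
      - DI * (H y - y / m * ∫ z in a..b, H z * p z)) * p y = 0 := by
  calc _ = ∫ y in a..b, (-DS * ((G y - y / m * ∫ z in a..b, G z * p z) * p y)
        - DI * ((H y - y / m * ∫ z in a..b, H z * p z) * p y)) := by congr 1; ext y; ring
    _ = 0 := by
      rw [intervalIntegral.integral_sub ((intervalIntegrable_sub_div_mul hab hp hG).const_mul _)
          ((intervalIntegrable_sub_div_mul hab hp hH).const_mul _),
        intervalIntegral.integral_const_mul, intervalIntegral.integral_const_mul,
        intervalIntegral_sub_div_mul_eq_zero hab hp hG hm hm0,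
        intervalIntegral_sub_div_mul_eq_zero hab hp hH hm hm0]
      ring

end Redistribution

lemma mass_conservation {xmax m DS DI : ℝ} {p : ℝ → ℝ} {S I : ℝ → ℝ → ℝ}
    (hxmax : 0 ≤ xmax) (hp : IntervalIntegrable p volume 0 xmax)
    (hm : m = ∫ x in (0:ℝ)..xmax, x * p x) (hm0 : m ≠ 0)
    (hS : ContinuousOn (uncurry S) (Icc 0 xmax ×ˢ Ici 0))
    (hI : ContinuousOn (uncurry I) (Icc 0 xmax ×ˢ Ici 0))
    (hN' : ∀ x ∈ Icc (0:ℝ) xmax, ∀ t ∈ Ici (0:ℝ),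
      HasDerivAt (fun τ => S x τ + I x τ)
        (-(DS * (S x t - x / m * ∫ y in (0:ℝ)..xmax, S y t * p y))
          - DI * (I x t - x / m * ∫ y in (0:ℝ)..xmax, I y t * p y)) t)
    {t : ℝ} (ht : 0 ≤ t) :
    (∫ y in (0:ℝ)..xmax, S y t * p y) + (∫ y in (0:ℝ)..xmax, I y t * p y)
      = (∫ y in (0:ℝ)..xmax, S y 0 * p y) + ∫ y in (0:ℝ)..xmax, I y 0 * p y := by
  rcases ht.eq_or_lt with rfl | ht
  · rfl
  have hS : ContinuousOn (uncurry S) (Icc 0 xmax ×ˢ Icc 0 t) :=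
    hS.mono (prod_mono_right Icc_subset_Ici_self)
  have hI : ContinuousOn (uncurry I) (Icc 0 xmax ×ˢ Icc 0 t) :=
    hI.mono (prod_mono_right Icc_subset_Ici_self)
  have hRS := continuousOn_sub_div_mul_intervalIntegral hxmax hp hS m
  have hRI := continuousOn_sub_div_mul_intervalIntegral hxmax hp hI m
  have hN : ContinuousOn (uncurry fun y τ => S y τ + I y τ) (Icc 0 xmax ×ˢ Icc 0 t) :=
    hS.add hI
  have hN'c : ContinuousOn (uncurry fun y τ =>
      -(DS * (S y τ - y / m * ∫ z in (0:ℝ)..xmax, S z τ * p z))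
        - DI * (I y τ - y / m * ∫ z in (0:ℝ)..xmax, I z τ * p z)) (Icc 0 xmax ×ˢ Icc 0 t) :=
    (continuousOn_const.mul hRS).neg.sub (continuousOn_const.mul hRI)
  have hsplit : ∀ τ ∈ Icc 0 t, ∫ y in (0:ℝ)..xmax, (S y τ + I y τ) * p y
      = (∫ y in (0:ℝ)..xmax, S y τ * p y) + ∫ y in (0:ℝ)..xmax, I y τ * p y := fun τ hτ => by
    simp only [add_mul]
    exact intervalIntegral.integral_add
      (intervalIntegrable_mul_of_continuousOn_prod hxmax hp hS hτ)
      (intervalIntegrable_mul_of_continuousOn_prod hxmax hp hI hτ)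
  obtain ⟨c, hc, hslope⟩ := exists_hasDerivAt_eq_slope
    (fun τ => ∫ y in (0:ℝ)..xmax, (S y τ + I y τ) * p y) _ ht
    (continuousOn_intervalIntegral_mul hxmax hp hN)
    (fun τ hτ => hasDerivAt_intervalIntegral_mul hxmax hp hN hN'c
      (fun y hy τ hτ => hN' y hy τ hτ.1.le) hτ)
  have hc : c ∈ Icc 0 t := Ioo_subset_Icc_self hc
  rw [intervalIntegral_exchange_mul_eq_zero DS DI hxmax hp (hS.uncurry_right c hc)
    (hI.uncurry_right c hc) hm hm0, eq_comm, div_eq_zero_iff, sub_eq_zero] at hslope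
  rw [← hsplit t (right_mem_Icc.2 ht.le), ← hsplit 0 (left_mem_Icc.2 ht.le)]
  exact hslope.resolve_right (sub_ne_zero.2 ht.ne')

lemma le_of_deriv_right_le_neg_mul_sub {f f' : ℝ → ℝ} {a b d K : ℝ}
    (hf : ContinuousOn f (Icc a b)) (hf' : ∀ x ∈ Ico a b, HasDerivWithinAt f (f' x) (Ici x) x)
    (ha : f a ≤ K) (bound : ∀ x ∈ Ico a b, f' x ≤ -d * (f x - K)) :
    ∀ x ∈ Icc a b, f x ≤ K := by
  intro x hx
  have := le_gronwallBound_of_liminf_deriv_right_le (f := fun x => f x - K) (δ := 0) (K := -d)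
    (ε := 0) (hf.sub continuousOn_const)
    (fun x hx _ hr => ((hf' x hx).sub_const K).liminf_right_slope_le hr)
    (sub_nonpos.2 ha) (by simpa only [add_zero, sub_zero] using bound) x hx
  rw [gronwallBound_ε0_δ0] at this
  linarith

lemma redistribution_le_relaxation {DS DI S I s i w n C : ℝ} (hDS : 0 < DS) (hDI : 0 < DI)
    (hS : 0 ≤ S) (hI : 0 ≤ I) (hs : 0 ≤ s) (hi : 0 ≤ i) (hw : 0 ≤ w) (hn : s + i = n)
    (hC : max DI DS / min DI DS ≤ C) :
    -(DS * (S - w * s)) - DI * (I - w * i) ≤ -min DI DS * (S + I - C * n * w) := by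
  have hD : max DI DS ≤ C * min DI DS := (div_le_iff₀ (lt_min hDI hDS)).1 hC
  have hws : w * (DS * s + DI * i) ≤ w * (max DI DS * n) := by
    rw [← hn]
    gcongr
    nlinarith [le_max_right DI DS, le_max_left DI DS]
  have hwn : 0 ≤ w * n := mul_nonneg hw (hn ▸ add_nonneg hs hi)
  nlinarith [min_le_left DI DS, min_le_right DI DS, mul_le_mul_of_nonneg_left hD hwn]

theorem apriori_bound_N_general
    (xmax m μ β₀ DS DI : ℝ) (p : ℝ → ℝ)
    (hxmax : 0 < xmax) (hm : 0 < m)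
    (hDS : 0 < DS) (hDI : 0 < DI)
    (hp_nonneg : ∀ x ∈ Icc (0:ℝ) xmax, 0 ≤ p x)
    (hp_int : ∫ x in (0:ℝ)..xmax, p x = 1)
    (hm_def : m = ∫ x in (0:ℝ)..xmax, x * p x)
    (S₀ I₀ : ℝ → ℝ)
    (n₀ : ℝ)
    (hn₀ : n₀ = (∫ x in (0:ℝ)..xmax, S₀ x * p x) + ∫ x in (0:ℝ)..xmax, I₀ x * p x)
    (C : ℝ)
    (hN0 : ∀ x ∈ Icc (0:ℝ) xmax, S₀ x + I₀ x ≤ C * n₀ * (x / m))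
    (S I : ℝ → ℝ → ℝ)
    (hS_smooth : ContDiffOn ℝ 1 (Function.uncurry S) (Icc 0 xmax ×ˢ Ici 0))
    (hI_smooth : ContDiffOn ℝ 1 (Function.uncurry I) (Icc 0 xmax ×ˢ Ici 0))
    (hSeq : ∀ x ∈ Icc (0:ℝ) xmax, ∀ t ∈ Ici (0:ℝ),
      HasDerivAt (S x)
        (I x t * (μ - β₀ * S x t) -
          DS * (S x t - x / m * ∫ y in (0:ℝ)..xmax, S y t * p y)) t)
    (hIeq : ∀ x ∈ Icc (0:ℝ) xmax, ∀ t ∈ Ici (0:ℝ),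
      HasDerivAt (I x)
        (I x t * (-μ + β₀ * S x t) -
          DI * (I x t - x / m * ∫ y in (0:ℝ)..xmax, I y t * p y)) t)
    (hSinit : ∀ x ∈ Icc (0:ℝ) xmax, S x 0 = S₀ x)
    (hIinit : ∀ x ∈ Icc (0:ℝ) xmax, I x 0 = I₀ x)
    (hSnonneg : ∀ x ∈ Icc (0:ℝ) xmax, ∀ t ∈ Ici (0:ℝ), 0 ≤ S x t)
    (hInonneg : ∀ x ∈ Icc (0:ℝ) xmax, ∀ t ∈ Ici (0:ℝ), 0 ≤ I x t) :
    ∀ x ∈ Icc (0:ℝ) xmax, ∀ t ∈ Ici (0:ℝ),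
      0 ≤ S x t + I x t ∧
      S x t + I x t ≤ max C (max DI DS / min DI DS) * n₀ * (x / m) := by
  have hp : IntervalIntegrable p volume 0 xmax :=
    intervalIntegral.intervalIntegrable_of_integral_ne_zero (hp_int ▸ one_ne_zero)
  have hN' : ∀ x ∈ Icc (0:ℝ) xmax, ∀ t ∈ Ici (0:ℝ), HasDerivAt (fun τ => S x τ + I x τ)
      (-(DS * (S x t - x / m * ∫ y in (0:ℝ)..xmax, S y t * p y))
        - DI * (I x t - x / m * ∫ y in (0:ℝ)..xmax, I y t * p y)) t := fun x hx t ht =>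
    ((hSeq x hx t ht).add (hIeq x hx t ht)).congr_deriv (by ring)
  have hmean_nonneg : ∀ G : ℝ → ℝ, (∀ y ∈ Icc (0:ℝ) xmax, 0 ≤ G y) →
      0 ≤ ∫ y in (0:ℝ)..xmax, G y * p y := fun G hG =>
    intervalIntegral.integral_nonneg hxmax.le fun y hy => mul_nonneg (hG y hy) (hp_nonneg y hy)
  have hmass : ∀ t ∈ Ici (0:ℝ),
      (∫ y in (0:ℝ)..xmax, S y t * p y) + (∫ y in (0:ℝ)..xmax, I y t * p y) = n₀ := by
    intro t ht
    rw [mass_conservation hxmax.le hp hm_def hm.ne' hS_smooth.continuousOn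
      hI_smooth.continuousOn hN' ht, hn₀]
    congr 1 <;> refine intervalIntegral.integral_congr fun y hy => ?_
    · rw [hSinit y (uIcc_of_le hxmax.le ▸ hy)]
    · rw [hIinit y (uIcc_of_le hxmax.le ▸ hy)]
  have hn₀_nonneg : 0 ≤ n₀ := hmass 0 self_mem_Ici ▸
    add_nonneg (hmean_nonneg _ fun y hy => hSnonneg y hy 0 self_mem_Ici)
      (hmean_nonneg _ fun y hy => hInonneg y hy 0 self_mem_Ici)
  intro x hx t ht
  have hxm : 0 ≤ x / m := div_nonneg hx.1 hm.le
  refine ⟨add_nonneg (hSnonneg x hx t ht) (hInonneg x hx t ht), ?_⟩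
  refine le_of_deriv_right_le_neg_mul_sub (d := min DI DS)
    (fun τ hτ => (hN' x hx τ hτ.1).continuousAt.continuousWithinAt)
    (fun τ hτ => (hN' x hx τ hτ.1).hasDerivWithinAt) ?_ (fun τ hτ => ?_) t ⟨ht, le_rfl⟩
  · rw [hSinit x hx, hIinit x hx]
    exact (hN0 x hx).trans (by gcongr; exact le_max_left _ _)
  · exact redistribution_le_relaxation hDS hDI (hSnonneg x hx τ hτ.1) (hInonneg x hx τ hτ.1)
      (hmean_nonneg _ fun y hy => hSnonneg y hy τ hτ.1)
      (hmean_nonneg _ fun y hy => hInonneg y hy τ hτ.1) hxm (hmass τ hτ.1) (le_max_right _ _)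

/-- Lemma 5.1 (1): a priori bound for the total density `N = S + I` of a nonnegative
solution of system `(C)`: if `0 ≤ N(x,0) ≤ C n₀ x/m` with `C ≥ 1`, then
`0 ≤ N(x,t) ≤ C̃ n₀ x/m` for all `t ≥ 0`, where `C̃ = max(C, D/d)`,
`d = min(D_I,D_S)`, `D = max(D_I,D_S)`. -/
theorem apriori_bound_N
    (xmax m μ β₀ DS DI : ℝ) (p : ℝ → ℝ)
    (hxmax : 0 < xmax) (hm : 0 < m) (hμ : 0 < μ) (hβ₀ : 0 < β₀)
    (hDS : 0 < DS) (hDI : 0 < DI)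
    (hp_nonneg : ∀ x ∈ Icc (0:ℝ) xmax, 0 ≤ p x) (hp0 : p 0 = 0)
    (hp_int : ∫ x in (0:ℝ)..xmax, p x = 1)
    (hm_def : m = ∫ x in (0:ℝ)..xmax, x * p x)
    (S₀ I₀ : ℝ → ℝ)
    (hS₀ : ContDiff ℝ 1 S₀) (hI₀ : ContDiff ℝ 1 I₀)
    (hS₀nonneg : ∀ x ∈ Icc (0:ℝ) xmax, 0 ≤ S₀ x)
    (hI₀nonneg : ∀ x ∈ Icc (0:ℝ) xmax, 0 ≤ I₀ x)
    (hS₀zero : S₀ 0 = 0) (hI₀zero : I₀ 0 = 0)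
    (n₀ : ℝ)
    (hn₀ : n₀ = (∫ x in (0:ℝ)..xmax, S₀ x * p x) + ∫ x in (0:ℝ)..xmax, I₀ x * p x)
    (hn₀pos : 0 < n₀)
    (C : ℝ) (hC : 1 ≤ C)
    (hN0 : ∀ x ∈ Icc (0:ℝ) xmax, S₀ x + I₀ x ≤ C * n₀ * (x / m))
    (S I : ℝ → ℝ → ℝ)
    (hS_smooth : ContDiffOn ℝ 1 (Function.uncurry S) (Icc 0 xmax ×ˢ Ici 0))
    (hI_smooth : ContDiffOn ℝ 1 (Function.uncurry I) (Icc 0 xmax ×ˢ Ici 0))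
    (hSeq : ∀ x ∈ Icc (0:ℝ) xmax, ∀ t ∈ Ici (0:ℝ),
      HasDerivAt (S x)
        (I x t * (μ - β₀ * S x t) -
          DS * (S x t - x / m * ∫ y in (0:ℝ)..xmax, S y t * p y)) t)
    (hIeq : ∀ x ∈ Icc (0:ℝ) xmax, ∀ t ∈ Ici (0:ℝ),
      HasDerivAt (I x)
        (I x t * (-μ + β₀ * S x t) -
          DI * (I x t - x / m * ∫ y in (0:ℝ)..xmax, I y t * p y)) t)
    (hSinit : ∀ x ∈ Icc (0:ℝ) xmax, S x 0 = S₀ x)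
    (hIinit : ∀ x ∈ Icc (0:ℝ) xmax, I x 0 = I₀ x)
    (hSnonneg : ∀ x ∈ Icc (0:ℝ) xmax, ∀ t ∈ Ici (0:ℝ), 0 ≤ S x t)
    (hInonneg : ∀ x ∈ Icc (0:ℝ) xmax, ∀ t ∈ Ici (0:ℝ), 0 ≤ I x t) :
    ∀ x ∈ Icc (0:ℝ) xmax, ∀ t ∈ Ici (0:ℝ),
      0 ≤ S x t + I x t ∧
      S x t + I x t ≤ max C (max DI DS / min DI DS) * n₀ * (x / m) :=
  apriori_bound_N_general xmax m μ β₀ DS DI p hxmax hm hDS hDI hp_nonneg hp_int hm_def S₀ I₀ n₀ hn₀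
    C hN0 S I hS_smooth hI_smooth hSeq hIeq hSinit hIinit hSnonneg hInonneg
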